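/- Rescaling estimate for the BBM seminorm: fix 0 < t < 1/2, f ∈ L^1((0,1)^d), and set g(x) = f((1−2t)x + t·(1,…,1)) for x ∈ (0,1)^d. Let φ ∈ C_c(ℝ^d) with φ ≥ 0, supp φ ⊂ (−t,t)^d, ∫φ = 1, and h = φ * g (well-defined on (0,1)^d since g extends to (−t,1+t)^d). Then for every 0 < ε ≤ 1, [h]_ε ≤ (1−2t)^{1−d} [f]_{(1−2t)ε} ≤ (1−2t)^{1−d} ‖f‖_B, and in particular ‖h‖_B ≤ (1−2t)^{1−d}‖f‖_B. -/

import Mathlib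

open MeasureTheory Filter

noncomputable section

/-- The open unit cube `(0,1)^d`. -/
def unitCube (d : ℕ) : Set (Fin d → ℝ) := Set.univ.pi fun _ => Set.Ioo 0 1

/-- The axis-parallel open cube with lower corner `a` and side length `ε`. -/
def cube (d : ℕ) (a : Fin d → ℝ) (ε : ℝ) : Set (Fin d → ℝ) :=
  Set.univ.pi fun i => Set.Ioo (a i) (a i + ε)

/-- Mean oscillation `M(f,Q) = (1/|Q|) ∫_Q |f - f_Q|`. -/
def MO (d : ℕ) (f : (Fin d → ℝ) → ℝ) (Q : Set (Fin d → ℝ)) : ℝ :=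
  ⨍ x in Q, |f x - ⨍ y in Q, f y|

/-- A finite family (given by its set of lower corners) of pairwise disjoint
axis-parallel `ε`-cubes contained in `(0,1)^d`. -/
def IsCubeFamily (d : ℕ) (ε : ℝ) (F : Finset (Fin d → ℝ)) : Prop :=
  (∀ a ∈ F, cube d a ε ⊆ unitCube d) ∧
  (F : Set (Fin d → ℝ)).Pairwise fun a b => Disjoint (cube d a ε) (cube d b ε)

/-- The set of sums `Σ_{Q ∈ F_ε} M(f,Q)` over admissible families with `|F_ε| ≤ ε^{1-d}`. -/
def famSums (d : ℕ) (f : (Fin d → ℝ) → ℝ) (ε : ℝ) : Set ℝ :=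
  {s | ∃ F : Finset (Fin d → ℝ), IsCubeFamily d ε F ∧ (F.card : ℝ) ≤ ε ^ (1 - (d : ℤ)) ∧
    s = ∑ a ∈ F, MO d f (cube d a ε)}

/-- `[f]_ε = ε^{d-1} sup_{F_ε} Σ_{Q ∈ F_ε} M(f,Q)`. -/
def bbmE (d : ℕ) (f : (Fin d → ℝ) → ℝ) (ε : ℝ) : ℝ :=
  ε ^ ((d : ℤ) - 1) * sSup (famSums d f ε)

/-- `‖f‖_B = sup_{0 < ε ≤ 1} [f]_ε`. -/
def bbmNorm (d : ℕ) (f : (Fin d → ℝ) → ℝ) : ℝ :=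
  sSup {s | ∃ ε : ℝ, 0 < ε ∧ ε ≤ 1 ∧ s = bbmE d f ε}

/-- Membership in the Bourgain–Brezis–Mironescu space `B`. -/
def MemB (d : ℕ) (f : (Fin d → ℝ) → ℝ) : Prop :=
  IntegrableOn f (unitCube d) ∧ BddAbove {s | ∃ ε : ℝ, 0 < ε ∧ ε ≤ 1 ∧ s = bbmE d f ε}

/-- Membership in the vanishing subspace `B₀`. -/
def MemB0 (d : ℕ) (f : (Fin d → ℝ) → ℝ) : Prop :=
  MemB d f ∧ Filter.limsup (fun ε => bbmE d f ε) (nhdsWithin 0 (Set.Ioi 0)) = 0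

namespace Stmt8Aux

variable {d : ℕ}

lemma measurableSet_cube (a : Fin d → ℝ) (ε : ℝ) : MeasurableSet (cube d a ε) :=
  MeasurableSet.univ_pi fun _ => measurableSet_Ioo

lemma measurableSet_unitCube : MeasurableSet (unitCube d) :=
  MeasurableSet.univ_pi fun _ => measurableSet_Ioo

lemma mem_cube {a x : Fin d → ℝ} {ε : ℝ} :
    x ∈ cube d a ε ↔ ∀ i, a i < x i ∧ x i < a i + ε := by
  simp [cube, Set.mem_univ_pi]

lemma volume_cube (a : Fin d → ℝ) {ε : ℝ} (hε : 0 ≤ ε) :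
    volume (cube d a ε) = ENNReal.ofReal (ε ^ d) := by
  rw [cube, volume_pi_pi]
  simp only [Real.volume_Ioo, add_sub_cancel_left]
  rw [Finset.prod_const, Finset.card_univ, Fintype.card_fin, ← ENNReal.ofReal_pow hε]

lemma cube_subset_iff {a : Fin d → ℝ} {ε : ℝ} (hε : 0 < ε) :
    cube d a ε ⊆ unitCube d ↔ ∀ i, 0 ≤ a i ∧ a i + ε ≤ 1 := by
  rw [cube, unitCube, Set.univ_pi_subset_univ_pi_iff]
  constructor
  · rintro (h | ⟨i, hi⟩)
    · intro i
      have := h i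
      rw [Set.Ioo_subset_Ioo_iff (by linarith)] at this
      exact this
    · exact absurd hi (Set.nonempty_Ioo.2 (by linarith)).ne_empty
  · intro h; left; intro i; exact Set.Ioo_subset_Ioo (h i).1 (h i).2

lemma disjoint_cube_iff {a b : Fin d → ℝ} {ε : ℝ} :
    Disjoint (cube d a ε) (cube d b ε) ↔ ∃ i, a i + ε ≤ b i ∨ b i + ε ≤ a i := by
  constructor
  · intro h
    by_contra hc
    push_neg at hc
    have hx : (fun i => (a i + b i + ε) / 2) ∈ cube d a ε ∩ cube d b ε := by
      constructor <;> rw [mem_cube] <;> intro i <;>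
        obtain ⟨h1, h2⟩ := hc i <;> constructor <;> linarith
    exact Set.disjoint_left.1 h hx.1 hx.2
  · rintro ⟨i, hi⟩
    rw [Set.disjoint_left]
    intro x hx hx'
    obtain ⟨h1, h2⟩ := mem_cube.1 hx i
    obtain ⟨h3, h4⟩ := mem_cube.1 hx' i
    rcases hi with hi | hi <;> linarith

lemma preimage_affine_cube {c : ℝ} (hc : 0 < c) (b a : Fin d → ℝ) (ε : ℝ) :
    (fun x : Fin d → ℝ => c • x + b) ⁻¹' cube d (fun i => c * a i + b i) (c * ε) = cube d a ε := by
  ext x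
  simp only [Set.mem_preimage, mem_cube, Pi.add_apply, Pi.smul_apply, smul_eq_mul]
  refine forall_congr' fun i => ?_
  constructor <;> rintro ⟨h1, h2⟩ <;> constructor <;> nlinarith

lemma setIntegral_comp_affine {c : ℝ} (hc : 0 < c) (b a : Fin d → ℝ) (ε : ℝ)
    (ψ : (Fin d → ℝ) → ℝ) :
    ∫ x in cube d a ε, ψ (c • x + b) =
      (c ^ d)⁻¹ * ∫ x in cube d (fun i => c * a i + b i) (c * ε), ψ x := by
  set Q' := cube d (fun i => c * a i + b i) (c * ε) with hQ'
  have key : ∀ x, (cube d a ε).indicator (fun x => ψ (c • x + b)) x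
      = Q'.indicator ψ (c • x + b) := by
    intro x
    have hx : x ∈ cube d a ε ↔ c • x + b ∈ Q' := by
      rw [hQ', ← preimage_affine_cube hc b a ε]; rfl
    by_cases h : x ∈ cube d a ε
    · rw [Set.indicator_of_mem h, Set.indicator_of_mem (hx.1 h)]
    · rw [Set.indicator_of_notMem h, Set.indicator_of_notMem (fun hh => h (hx.2 hh))]
  rw [← integral_indicator (measurableSet_cube a ε)]
  simp_rw [key]
  have h1 : ∀ x : Fin d → ℝ, c • x + b = c • (x + c⁻¹ • b) := by
    intro x; rw [smul_add, smul_inv_smul₀ hc.ne']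
  simp_rw [h1]
  rw [integral_add_right_eq_self (fun x => Q'.indicator ψ (c • x)) (c⁻¹ • b)]
  rw [Measure.integral_comp_smul volume (Q'.indicator ψ) c]
  rw [integral_indicator (measurableSet_cube _ _)]
  rw [abs_of_nonneg (by positivity), Module.finrank_fintype_fun_eq_card,
    Fintype.card_fin, smul_eq_mul]

lemma setAverage_comp_affine {c ε : ℝ} (hc : 0 < c) (hε : 0 < ε) (b a : Fin d → ℝ)
    (ψ : (Fin d → ℝ) → ℝ) :
    ⨍ x in cube d a ε, ψ (c • x + b) =
      ⨍ x in cube d (fun i => c * a i + b i) (c * ε), ψ x := by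
  rw [setAverage_eq, setAverage_eq, measureReal_def, measureReal_def, volume_cube _ hε.le, volume_cube _ (by positivity),
    setIntegral_comp_affine hc b a ε ψ, smul_eq_mul, smul_eq_mul,
    ENNReal.toReal_ofReal (by positivity), ENNReal.toReal_ofReal (by positivity),
    mul_pow]
  ring

lemma integrableOn_comp_affine {c : ℝ} (hc : 0 < c) (b a : Fin d → ℝ) (ε : ℝ)
    {ψ : (Fin d → ℝ) → ℝ}
    (h : IntegrableOn ψ (cube d (fun i => c * a i + b i) (c * ε))) :
    IntegrableOn (fun x => ψ (c • x + b)) (cube d a ε) := by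
  set Q' := cube d (fun i => c * a i + b i) (c * ε) with hQ'
  have h0 : Integrable (Q'.indicator ψ) := by
    rwa [integrable_indicator_iff (measurableSet_cube _ _)]
  have h2 : Integrable (fun x : Fin d → ℝ => Q'.indicator ψ (c • x)) :=
    (integrable_comp_smul_iff volume (Q'.indicator ψ) hc.ne').mpr h0
  have h3 : Integrable (fun x : Fin d → ℝ => Q'.indicator ψ (c • (x + c⁻¹ • b))) :=
    h2.comp_add_right (c⁻¹ • b)
  have h4 : Integrable (fun x : Fin d → ℝ => Q'.indicator ψ (c • x + b)) := by
    convert h3 using 2 with x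
    rw [smul_add, smul_inv_smul₀ hc.ne']
  refine (integrable_indicator_iff (measurableSet_cube a ε)).mp ?_
  refine h4.congr (ae_of_all _ fun x => ?_)
  dsimp only
  have hx : x ∈ cube d a ε ↔ c • x + b ∈ Q' := by
    rw [hQ', ← preimage_affine_cube hc b a ε]; rfl
  by_cases hm : x ∈ cube d a ε
  · rw [Set.indicator_of_mem hm, Set.indicator_of_mem (hx.1 hm)]
  · rw [Set.indicator_of_notMem hm, Set.indicator_of_notMem (fun hh => hm (hx.2 hh))]

lemma MO_nonneg {f : (Fin d → ℝ) → ℝ} {Q : Set (Fin d → ℝ)} : 0 ≤ MO d f Q := by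
  rw [MO, setAverage_eq, smul_eq_mul]
  have : 0 ≤ ∫ x in Q, |f x - ⨍ y in Q, f y| :=
    integral_nonneg fun x => abs_nonneg _
  positivity

lemma MO_congr_ae {f₁ f₂ : (Fin d → ℝ) → ℝ} {Q : Set (Fin d → ℝ)}
    (h : f₁ =ᵐ[volume.restrict Q] f₂) : MO d f₁ Q = MO d f₂ Q := by
  have hm : ⨍ y in Q, f₁ y = ⨍ y in Q, f₂ y := by
    rw [setAverage_eq, setAverage_eq, integral_congr_ae h]
  rw [MO, MO, hm]
  exact average_congr (h.mono fun x hx => by simp only []; rw [hx])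

lemma MO_le_bound {f : (Fin d → ℝ) → ℝ} (hfi : IntegrableOn f (unitCube d))
    {a : Fin d → ℝ} {ε : ℝ} (hε : 0 < ε) (hQ : cube d a ε ⊆ unitCube d) :
    MO d f (cube d a ε) ≤ 2 * (ε ^ d)⁻¹ * ∫ x in unitCube d, |f x| := by
  set Q := cube d a ε with hQdef
  have hεd : (0:ℝ) < ε ^ d := by positivity
  have hvol : volume.real Q = ε ^ d := by
    rw [measureReal_def, volume_cube a hε.le, ENNReal.toReal_ofReal hεd.le]
  have hfin : volume Q ≠ ⊤ := by rw [volume_cube a hε.le]; exact ENNReal.ofReal_ne_top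
  have hfQ : IntegrableOn f Q := hfi.mono_set hQ
  have hfQa : IntegrableOn (fun x => |f x|) Q := hfQ.abs
  have hIQ : ∫ x in Q, |f x| ≤ ∫ x in unitCube d, |f x| := by
    refine setIntegral_mono_set hfi.abs ?_ (HasSubset.Subset.eventuallyLE hQ)
    exact ae_of_all _ fun x => abs_nonneg _
  have hIQ0 : 0 ≤ ∫ x in Q, |f x| := integral_nonneg fun x => abs_nonneg _
  set m := ⨍ y in Q, f y with hm
  have hmabs : |m| ≤ (ε ^ d)⁻¹ * ∫ x in Q, |f x| := by
    rw [hm, setAverage_eq, smul_eq_mul, abs_mul, hvol, abs_of_nonneg (by positivity)]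
    gcongr
    calc |∫ x in Q, f x| = ‖∫ x in Q, f x‖ := (Real.norm_eq_abs _).symm
    _ ≤ ∫ x in Q, ‖f x‖ := norm_integral_le_integral_norm _
    _ = ∫ x in Q, |f x| := by simp [Real.norm_eq_abs]
  have hconst : IntegrableOn (fun _ => m) Q := integrableOn_const hfin
  have h1 : ∫ x in Q, |f x - m| ≤ ∫ x in Q, (|f x| + |m|) := by
    refine integral_mono (hfQ.sub hconst).abs (hfQa.add hconst.abs) fun x => ?_
    exact abs_sub _ _
  have h2 : ∫ x in Q, (|f x| + |m|) = (∫ x in Q, |f x|) + (ε ^ d) * |m| := by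
    rw [integral_add hfQa hconst.abs, setIntegral_const, hvol, smul_eq_mul]
  rw [MO, setAverage_eq, smul_eq_mul, hvol, ← hm]
  calc (ε ^ d)⁻¹ * ∫ x in Q, |f x - m|
      ≤ (ε ^ d)⁻¹ * ((∫ x in Q, |f x|) + (ε ^ d) * |m|) := by
        rw [← h2]; exact mul_le_mul_of_nonneg_left h1 (by positivity)
    _ ≤ (ε ^ d)⁻¹ * ((∫ x in Q, |f x|) + (ε ^ d) * ((ε ^ d)⁻¹ * ∫ x in Q, |f x|)) := by
        gcongr
    _ = 2 * (ε ^ d)⁻¹ * ∫ x in Q, |f x| := by field_simp; ring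
    _ ≤ 2 * (ε ^ d)⁻¹ * ∫ x in unitCube d, |f x| := by gcongr

lemma zero_mem_famSums (f : (Fin d → ℝ) → ℝ) {ε : ℝ} (hε : 0 < ε) :
    (0:ℝ) ∈ famSums d f ε := by
  refine ⟨∅, ⟨fun a ha => absurd ha (Finset.notMem_empty a), by simp⟩, ?_, by simp⟩
  simp only [Finset.card_empty, Nat.cast_zero]
  exact (zpow_pos hε _).le

lemma famSums_nonneg {f : (Fin d → ℝ) → ℝ} {ε : ℝ} {s : ℝ} (hs : s ∈ famSums d f ε) :
    0 ≤ s := by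
  obtain ⟨F, _, _, rfl⟩ := hs
  exact Finset.sum_nonneg fun a _ => MO_nonneg

lemma bddAbove_famSums {f : (Fin d → ℝ) → ℝ} (hfi : IntegrableOn f (unitCube d))
    {ε : ℝ} (hε : 0 < ε) : BddAbove (famSums d f ε) := by
  set B := 2 * (ε ^ d)⁻¹ * ∫ x in unitCube d, |f x| with hB
  have hB0 : 0 ≤ B := by
    have : 0 ≤ ∫ x in unitCube d, |f x| := integral_nonneg fun x => abs_nonneg _
    positivity
  refine ⟨ε ^ (1 - (d:ℤ)) * B, fun s hs => ?_⟩
  obtain ⟨F, ⟨hsub, _⟩, hcard, rfl⟩ := hs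
  calc ∑ a ∈ F, MO d f (cube d a ε) ≤ ∑ _a ∈ F, B :=
        Finset.sum_le_sum fun a ha => MO_le_bound hfi hε (hsub a ha)
    _ = (F.card : ℝ) * B := by rw [Finset.sum_const, nsmul_eq_mul]
    _ ≤ ε ^ (1 - (d:ℤ)) * B := mul_le_mul_of_nonneg_right hcard hB0

lemma sSup_famSums_nonneg (f : (Fin d → ℝ) → ℝ) {ε : ℝ} :
    0 ≤ sSup (famSums d f ε) :=
  Real.sSup_nonneg fun _ hs => famSums_nonneg hs

-- zpow comparison

lemma zpow_card_le {c ε : ℝ} (hc : 0 < c) (hc1 : c ≤ 1) (hε : 0 < ε) (hd : 0 < d) :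
    (ε:ℝ) ^ (1 - (d:ℤ)) ≤ (c * ε) ^ (1 - (d:ℤ)) := by
  rw [mul_zpow]
  have h1 : (1:ℝ) ≤ c ^ (1 - (d:ℤ)) := by
    have hn : (0:ℤ) ≤ (d:ℤ) - 1 := by
      have : (1:ℤ) ≤ (d:ℤ) := by exact_mod_cast hd
      omega
    have h2 : c ^ ((d:ℤ) - 1) ≤ 1 := by
      lift ((d:ℤ) - 1) to ℕ using hn with n hn'
      rw [zpow_natCast]
      exact pow_le_one₀ hc.le hc1
    have h3 : c ^ (1 - (d:ℤ)) = (c ^ ((d:ℤ) - 1))⁻¹ := by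
      rw [← zpow_neg]; ring_nf
    rw [h3]
    exact (one_le_inv₀ (zpow_pos hc _)).2 h2
  nlinarith [zpow_pos hε (1 - (d:ℤ)), zpow_pos hc (1 - (d:ℤ))]

-- transform of cubes

lemma transformed_cube_subset {c t : ℝ} (hcdef : c = 1 - 2*t) (ht0 : 0 < t) (ht1 : t < 1/2)
    {y : Fin d → ℝ} (hy : ∀ i, -t < y i ∧ y i < t) {a : Fin d → ℝ} {ε : ℝ} (hε : 0 < ε)
    (hQ : cube d a ε ⊆ unitCube d) :
    cube d (fun i => c * (a i - y i) + t) (c * ε) ⊆ unitCube d := by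
  have hc : 0 < c := by rw [hcdef]; linarith
  rw [cube_subset_iff (by positivity)]
  intro i
  obtain ⟨h1, h2⟩ := (cube_subset_iff hε).1 hQ i
  obtain ⟨h3, h4⟩ := hy i
  constructor
  · nlinarith
  · nlinarith

lemma cube_est {f φ : (Fin d → ℝ) → ℝ} (hsm : StronglyMeasurable f)
    (hfi : IntegrableOn f (unitCube d))
    {t c : ℝ} (hcdef : c = 1 - 2*t) (ht0 : 0 < t) (ht1 : t < 1/2)
    (hφcont : Continuous φ) (hφc : HasCompactSupport φ)
    (hφsupp : Function.support φ ⊆ Set.univ.pi fun _ => Set.Ioo (-t) t)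
    (hφ0 : ∀ y, 0 ≤ φ y)
    {a : Fin d → ℝ} {ε : ℝ} (hε : 0 < ε) (hQ : cube d a ε ⊆ unitCube d) :
    MO d (fun x => ∫ y, φ y * f fun i => c * (x i - y i) + t) (cube d a ε)
      ≤ ∫ y, φ y * MO d f (cube d (fun i => c * (a i - y i) + t) (c * ε)) ∧
    Integrable (fun y => φ y * MO d f (cube d (fun i => c * (a i - y i) + t) (c * ε))) := by
  have hc : 0 < c := by rw [hcdef]; linarith
  set Q := cube d a ε with hQdef
  set b : (Fin d → ℝ) → (Fin d → ℝ) := fun y i => t - c * y i with hbdef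
  have hb : ∀ (y x : Fin d → ℝ), (fun i => c * (x i - y i) + t) = c • x + b y := by
    intro y x; funext i
    simp only [hbdef, Pi.add_apply, Pi.smul_apply, smul_eq_mul]; ring
  have hA : ∀ y : Fin d → ℝ, (fun i => c * (a i - y i) + t) = fun i => c * a i + b y i := by
    intro y; funext i; simp only [hbdef]; ring
  have hQvol : volume Q = ENNReal.ofReal (ε ^ d) := volume_cube a hε.le
  have hεd : (0:ℝ) < ε ^ d := by positivity
  have hcd : (0:ℝ) < c ^ d := by positivity
  have hvolR : volume.real Q = ε ^ d := by rw [measureReal_def, hQvol, ENNReal.toReal_ofReal hεd.le]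
  haveI : IsFiniteMeasure (volume.restrict Q) :=
    ⟨by rw [Measure.restrict_apply_univ, hQvol]; exact ENNReal.ofReal_lt_top⟩
  have hbcont : Continuous (fun p : (Fin d → ℝ) × (Fin d → ℝ) => c • p.2 + b p.1) := by
    apply Continuous.add
    · exact continuous_snd.const_smul c
    · exact continuous_pi fun i =>
        continuous_const.sub (continuous_const.mul ((continuous_apply i).comp continuous_fst))
  set I := ∫ x in unitCube d, |f x| with hI
  have hI0 : 0 ≤ I := integral_nonneg fun x => abs_nonneg _
  have hsub : ∀ y ∈ Function.support φ,
      cube d (fun i => c * a i + b y i) (c * ε) ⊆ unitCube d := by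
    intro y hy
    have hmem := hφsupp hy
    rw [Set.mem_univ_pi] at hmem
    have h := transformed_cube_subset hcdef ht0 ht1
      (fun i => (Set.mem_Ioo.1 (hmem i))) hε hQ
    rwa [hA y] at h
  have hintf : ∀ y ∈ Function.support φ, IntegrableOn (fun x => f (c • x + b y)) Q :=
    fun y hy => integrableOn_comp_affine hc (b y) a ε (hfi.mono_set (hsub y hy))
  have hintnorm : ∀ y ∈ Function.support φ,
      ∫ x in Q, |f (c • x + b y)| ≤ (c ^ d)⁻¹ * I := by
    intro y hy
    rw [show (fun x => |f (c • x + b y)|) = fun x => (fun z => |f z|) (c • x + b y) from rfl,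
      setIntegral_comp_affine hc (b y) a ε (fun z => |f z|)]
    refine mul_le_mul_of_nonneg_left ?_ (by positivity)
    refine setIntegral_mono_set hfi.abs (ae_of_all _ fun x => abs_nonneg _)
      (HasSubset.Subset.eventuallyLE (hsub y hy))
  set K : (Fin d → ℝ) × (Fin d → ℝ) → ℝ := fun p => φ p.1 * f (c • p.2 + b p.1) with hK
  have hKsm : StronglyMeasurable K :=
    ((hφcont.comp continuous_fst).stronglyMeasurable).mul
      (hsm.comp_measurable hbcont.measurable)
  have hslice : ∀ y, Integrable (fun x => K (y, x)) (volume.restrict Q) := by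
    intro y
    by_cases hy : φ y = 0
    · simp only [hK, hy, zero_mul]; exact integrable_zero _ _ _
    · exact ((hintf y hy).const_mul (φ y) : _)
  have φint : Integrable φ := hφcont.integrable_of_hasCompactSupport hφc
  have hnorm_int : Integrable (fun y => ∫ x in Q, ‖K (y, x)‖) volume := by
    refine Integrable.mono' (φint.mul_const ((c ^ d)⁻¹ * I))
      (hKsm.norm.integral_prod_right').aestronglyMeasurable (ae_of_all _ fun y => ?_)
    rw [Real.norm_eq_abs, abs_of_nonneg (integral_nonneg fun x => norm_nonneg _)]
    by_cases hy : φ y = 0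
    · simp only [hK, hy, zero_mul, norm_zero, integral_zero]
      positivity
    · calc ∫ x in Q, ‖K (y, x)‖ = ∫ x in Q, |φ y| * |f (c • x + b y)| := by
            congr 1; funext x; rw [hK]; dsimp only
            rw [Real.norm_eq_abs, abs_mul]
        _ = |φ y| * ∫ x in Q, |f (c • x + b y)| := integral_const_mul _ _
        _ ≤ φ y * ((c ^ d)⁻¹ * I) := by
            rw [abs_of_nonneg (hφ0 y)]
            exact mul_le_mul_of_nonneg_left (hintnorm y hy) (hφ0 y)
  have hKint : Integrable K (volume.prod (volume.restrict Q)) :=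
    (integrable_prod_iff hKsm.aestronglyMeasurable).2 ⟨ae_of_all _ hslice, hnorm_int⟩
  -- the average function m
  set m : (Fin d → ℝ) → ℝ := fun y => ⨍ z in Q, f (c • z + b y) with hmdef
  have hmeq : ∀ y, m y = (ε ^ d)⁻¹ * ∫ z in Q, f (c • z + b y) := by
    intro y
    rw [hmdef]; dsimp only
    rw [setAverage_eq, smul_eq_mul, hvolR]
  have hmsm : StronglyMeasurable m := by
    have h1 : StronglyMeasurable (fun y => ∫ z in Q, f (c • z + b y)) :=
      StronglyMeasurable.integral_prod_right
        (f := fun y z => f (c • z + b y)) (hsm.comp_measurable hbcont.measurable)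
    have h2 : m = fun y => (ε ^ d)⁻¹ * ∫ z in Q, f (c • z + b y) := funext hmeq
    rw [h2]
    exact stronglyMeasurable_const.mul h1
  have hmb : ∀ y ∈ Function.support φ, |m y| ≤ (ε ^ d)⁻¹ * ((c ^ d)⁻¹ * I) := by
    intro y hy
    rw [hmeq y, abs_mul, abs_of_nonneg (inv_nonneg.2 hεd.le)]
    refine mul_le_mul_of_nonneg_left ?_ (inv_nonneg.2 hεd.le)
    calc |∫ z in Q, f (c • z + b y)| ≤ ∫ z in Q, |f (c • z + b y)| := by
          rw [← Real.norm_eq_abs]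
          refine (norm_integral_le_integral_norm _).trans (le_of_eq ?_)
          congr 1
      _ ≤ (c ^ d)⁻¹ * I := hintnorm y hy
  have hφm_int : Integrable (fun y => φ y * m y) volume := by
    refine Integrable.mono' (φint.mul_const ((ε ^ d)⁻¹ * ((c ^ d)⁻¹ * I)))
      (hφcont.stronglyMeasurable.mul hmsm).aestronglyMeasurable (ae_of_all _ fun y => ?_)
    rw [Real.norm_eq_abs, abs_mul, abs_of_nonneg (hφ0 y)]
    by_cases hy : φ y = 0
    · rw [hy]; simp only [zero_mul]; positivity
    · exact mul_le_mul_of_nonneg_left (hmb y hy) (hφ0 y)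
  have hφmabs_int : Integrable (fun y => φ y * |m y|) volume := by
    refine Integrable.mono' (φint.mul_const ((ε ^ d)⁻¹ * ((c ^ d)⁻¹ * I)))
      (hφcont.stronglyMeasurable.mul
        (continuous_abs.comp_stronglyMeasurable hmsm)).aestronglyMeasurable
      (ae_of_all _ fun y => ?_)
    rw [Real.norm_eq_abs, abs_mul, abs_of_nonneg (hφ0 y), abs_abs]
    by_cases hy : φ y = 0
    · rw [hy]; simp only [zero_mul]; positivity
    · exact mul_le_mul_of_nonneg_left (hmb y hy) (hφ0 y)
  set K₂ : (Fin d → ℝ) × (Fin d → ℝ) → ℝ :=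
    fun p => φ p.1 * |f (c • p.2 + b p.1) - m p.1| with hK₂
  have hK₂sm : StronglyMeasurable K₂ :=
    ((hφcont.comp continuous_fst).stronglyMeasurable).mul
      (continuous_abs.comp_stronglyMeasurable
        ((hsm.comp_measurable hbcont.measurable).sub (hmsm.comp_measurable measurable_fst)))
  have hmprod_int : Integrable (fun p : (Fin d → ℝ) × (Fin d → ℝ) => φ p.1 * |m p.1|)
      (volume.prod (volume.restrict Q)) := by
    have h2 : Integrable (fun _ : Fin d → ℝ => (1:ℝ)) (volume.restrict Q) := integrable_const 1
    have h3 := hφmabs_int.mul_prod h2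
    simpa using h3
  have hK₂int : Integrable K₂ (volume.prod (volume.restrict Q)) := by
    refine Integrable.mono' (hKint.norm.add hmprod_int) hK₂sm.aestronglyMeasurable
      (ae_of_all _ fun p => ?_)
    rw [Real.norm_eq_abs, hK₂]
    dsimp only
    rw [abs_mul, abs_of_nonneg (hφ0 p.1), abs_abs]
    have h1 : |f (c • p.2 + b p.1) - m p.1| ≤ |f (c • p.2 + b p.1)| + |m p.1| := abs_sub _ _
    have h2 : ‖K p‖ = φ p.1 * |f (c • p.2 + b p.1)| := by
      rw [hK, Real.norm_eq_abs]
      dsimp only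
      rw [abs_mul, abs_of_nonneg (hφ0 p.1)]
    show φ p.1 * |f (c • p.2 + b p.1) - m p.1| ≤ ‖K p‖ + φ p.1 * |m p.1|
    rw [h2]
    nlinarith [hφ0 p.1, abs_nonneg (m p.1), abs_nonneg (f (c • p.2 + b p.1))]
  -- the convolved function
  set h : (Fin d → ℝ) → ℝ := fun x => ∫ y, K (y, x) with hh
  have hgoalfun : (fun x => ∫ y, φ y * f fun i => c * (x i - y i) + t) = h := by
    funext x; rw [hh]; congr 1; funext y; rw [hb y x]
  -- average of h over Q
  have hQint : ∫ z in Q, h z = ∫ y, φ y * (ε ^ d * m y) := by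
    rw [hh]
    have hswap := (integral_integral_swap (f := fun y x => K (y, x))
      (μ := (volume : Measure (Fin d → ℝ))) (ν := volume.restrict Q) hKint).symm
    dsimp only
    rw [hswap]
    congr 1; funext y
    rw [hK]
    dsimp only
    rw [integral_const_mul]
    congr 1
    rw [hmeq y]
    field_simp
  have havg : ⨍ z in Q, h z = ∫ y, φ y * m y := by
    rw [setAverage_eq, smul_eq_mul, hvolR, hQint, ← integral_const_mul]
    congr 1; funext y; field_simp
  -- integrability of marginals
  have hhint : Integrable h (volume.restrict Q) := hKint.integral_prod_right
  have hPint : Integrable (fun x => ∫ y, K₂ (y, x)) (volume.restrict Q) :=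
    hK₂int.integral_prod_right
  have hGint' : Integrable (fun y => ∫ x in Q, K₂ (y, x)) volume :=
    hK₂int.integral_prod_left
  have hae : ∀ᵐ x ∂(volume.restrict Q), |h x - ⨍ z in Q, h z| ≤ ∫ y, K₂ (y, x) := by
    filter_upwards [hKint.prod_left_ae] with x hx
    have hsub' : h x - ⨍ z in Q, h z = ∫ y, φ y * (f (c • x + b y) - m y) := by
      rw [havg, hh]
      dsimp only
      rw [← integral_sub hx hφm_int]
      congr 1; funext y
      rw [hK]; dsimp only; ring
    rw [hsub']
    calc |∫ y, φ y * (f (c • x + b y) - m y)|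
        ≤ ∫ y, ‖φ y * (f (c • x + b y) - m y)‖ := by
          rw [← Real.norm_eq_abs]; exact norm_integral_le_integral_norm _
      _ = ∫ y, K₂ (y, x) := by
          congr 1; funext y
          rw [Real.norm_eq_abs, abs_mul, abs_of_nonneg (hφ0 y), hK₂]
  -- identification of the inner averages with MO
  have hG : ∀ y : Fin d → ℝ, MO d f (cube d (fun i => c * (a i - y i) + t) (c * ε))
      = ⨍ x in Q, |f (c • x + b y) - m y| := by
    intro y
    rw [MO, hA y]
    have h1 : ⨍ z in cube d (fun i => c * a i + b y i) (c * ε), f z = m y := by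
      rw [hmdef]; dsimp only; rw [setAverage_comp_affine hc hε (b y) a f]
    rw [← setAverage_comp_affine hc hε (b y) a
      (fun x => |f x - ⨍ z in cube d (fun i => c * a i + b y i) (c * ε), f z|), h1]
  have key : MO d h Q ≤ ∫ y, φ y * (⨍ x in Q, |f (c • x + b y) - m y|) := by
    have hMOh : MO d h Q = ⨍ x in Q, |h x - ⨍ z in Q, h z| := rfl
    rw [hMOh, setAverage_eq, smul_eq_mul, hvolR]
    have step1 : ∫ x in Q, |h x - ⨍ z in Q, h z| ≤ ∫ x in Q, ∫ y, K₂ (y, x) :=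
      integral_mono_ae ((hhint.sub (integrable_const _)).abs) hPint hae
    have step2 : ∫ x in Q, ∫ y, K₂ (y, x) = ∫ y, ∫ x in Q, K₂ (y, x) :=
      (integral_integral_swap (f := fun y x => K₂ (y, x)) hK₂int).symm
    calc (ε ^ d)⁻¹ * ∫ x in Q, |h x - ⨍ z in Q, h z|
        ≤ (ε ^ d)⁻¹ * ∫ y, ∫ x in Q, K₂ (y, x) := by
          rw [← step2]; exact mul_le_mul_of_nonneg_left step1 (inv_nonneg.2 hεd.le)
      _ = ∫ y, φ y * (⨍ x in Q, |f (c • x + b y) - m y|) := by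
          rw [← integral_const_mul]
          congr 1; funext y
          rw [hK₂]; dsimp only
          rw [integral_const_mul, setAverage_eq, smul_eq_mul, hvolR]
          ring
  have hfuneq : (fun y => φ y * MO d f (cube d (fun i => c * (a i - y i) + t) (c * ε)))
      = fun y => φ y * (⨍ x in Q, |f (c • x + b y) - m y|) := by
    funext y; rw [hG y]
  constructor
  · rw [hgoalfun, hfuneq]
    exact key
  · rw [hfuneq]
    have h2 : (fun y => φ y * (⨍ x in Q, |f (c • x + b y) - m y|))
        = fun y => (ε ^ d)⁻¹ * ∫ x in Q, K₂ (y, x) := by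
      funext y; rw [hK₂]; dsimp only
      rw [integral_const_mul, setAverage_eq, smul_eq_mul, hvolR]; ring
    rw [h2]
    exact hGint'.const_mul _

lemma transformed_mem_famSums {f : (Fin d → ℝ) → ℝ} {t c ε : ℝ}
    (hcdef : c = 1 - 2*t) (ht0 : 0 < t) (ht1 : t < 1/2) (hd : 0 < d) (hε : 0 < ε)
    {y : Fin d → ℝ} (hy : ∀ i, -t < y i ∧ y i < t)
    {F : Finset (Fin d → ℝ)} (hF : IsCubeFamily d ε F)
    (hcard : (F.card : ℝ) ≤ ε ^ (1 - (d:ℤ))) :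
    (∑ a ∈ F, MO d f (cube d (fun i => c * (a i - y i) + t) (c * ε)))
      ∈ famSums d f (c * ε) := by
  have hc : 0 < c := by rw [hcdef]; linarith
  have hc1 : c ≤ 1 := by rw [hcdef]; linarith
  set σ : (Fin d → ℝ) → (Fin d → ℝ) := fun a => fun i => c * (a i - y i) + t with hσ
  have hσa : ∀ (a : Fin d → ℝ) (i : Fin d), σ a i = c * (a i - y i) + t := fun a i => rfl
  have hinj : Function.Injective σ := by
    intro a1 a2 hsig
    funext i
    have h1 := congrFun hsig i
    rw [hσa, hσa] at h1
    have h2 : c * (a1 i - y i) = c * (a2 i - y i) := by linarith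
    have h3 := mul_left_cancel₀ hc.ne' h2
    linarith
  refine ⟨F.image σ, ⟨?_, ?_⟩, ?_, ?_⟩
  · intro a' ha'
    obtain ⟨a, ha, rfl⟩ := Finset.mem_image.1 ha'
    exact transformed_cube_subset hcdef ht0 ht1 hy hε (hF.1 a ha)
  · intro a' ha' b' hb' hne
    rw [Finset.mem_coe] at ha' hb'
    obtain ⟨a, ha, rfl⟩ := Finset.mem_image.1 ha'
    obtain ⟨bb, hbb, rfl⟩ := Finset.mem_image.1 hb'
    have hab : a ≠ bb := fun hcon => hne (by rw [hcon])
    have hdis : Disjoint (cube d a ε) (cube d bb ε) :=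
      hF.2 (Finset.mem_coe.2 ha) (Finset.mem_coe.2 hbb) hab
    rw [disjoint_cube_iff] at hdis
    rw [disjoint_cube_iff]
    obtain ⟨i, hi⟩ := hdis
    refine ⟨i, ?_⟩
    rw [hσa, hσa]
    rcases hi with hi | hi
    · left; nlinarith
    · right; nlinarith
  · rw [Finset.card_image_of_injective F hinj]
    exact hcard.trans (zpow_card_le hc hc1 hε hd)
  · rw [Finset.sum_image (fun a _ b _ hab => hinj hab)]

lemma famSums_le {f φ : (Fin d → ℝ) → ℝ} (hsm : StronglyMeasurable f)
    (hfi : IntegrableOn f (unitCube d)) (hd : 0 < d)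
    {t c : ℝ} (hcdef : c = 1 - 2*t) (ht0 : 0 < t) (ht1 : t < 1/2)
    (hφcont : Continuous φ) (hφc : HasCompactSupport φ)
    (hφsupp : Function.support φ ⊆ Set.univ.pi fun _ => Set.Ioo (-t) t)
    (hφ0 : ∀ y, 0 ≤ φ y) (hφ1 : (∫ y, φ y) = 1) {ε : ℝ} (hε : 0 < ε)
    {s : ℝ} (hs : s ∈ famSums d (fun x => ∫ y, φ y * f fun i => c * (x i - y i) + t) ε) :
    s ≤ sSup (famSums d f (c * ε)) := by
  have hc : 0 < c := by rw [hcdef]; linarith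
  obtain ⟨F, hF, hcard, rfl⟩ := hs
  set S := sSup (famSums d f (c * ε)) with hS
  have hbdd : BddAbove (famSums d f (c * ε)) := bddAbove_famSums hfi (by positivity)
  have hS0 : 0 ≤ S := sSup_famSums_nonneg f
  have φint : Integrable φ := hφcont.integrable_of_hasCompactSupport hφc
  have hcube := fun (a : Fin d → ℝ) (ha : a ∈ F) =>
    cube_est hsm hfi hcdef ht0 ht1 hφcont hφc hφsupp hφ0 hε (hF.1 a ha)
  calc ∑ a ∈ F, MO d (fun x => ∫ y, φ y * f fun i => c * (x i - y i) + t) (cube d a ε)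
      ≤ ∑ a ∈ F, ∫ y, φ y * MO d f (cube d (fun i => c * (a i - y i) + t) (c * ε)) :=
        Finset.sum_le_sum fun a ha => (hcube a ha).1
    _ = ∫ y, ∑ a ∈ F, φ y * MO d f (cube d (fun i => c * (a i - y i) + t) (c * ε)) :=
        (integral_finset_sum F fun a ha => (hcube a ha).2).symm
    _ ≤ ∫ y, φ y * S := by
        refine integral_mono (integrable_finset_sum F fun a ha => (hcube a ha).2)
          (φint.mul_const S) fun y => ?_
        rw [← Finset.mul_sum]
        by_cases hy : φ y = 0
        · rw [hy, zero_mul, zero_mul]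
        · refine mul_le_mul_of_nonneg_left ?_ (hφ0 y)
          have hymem : ∀ i, -t < y i ∧ y i < t := by
            have hmem := hφsupp hy
            rw [Set.mem_univ_pi] at hmem
            exact fun i => Set.mem_Ioo.1 (hmem i)
          exact le_csSup hbdd (transformed_mem_famSums hcdef ht0 ht1 hd hε hymem hF hcard)
    _ = S := by rw [integral_mul_const, hφ1, one_mul]

lemma transformed_point_mem {c t : ℝ} (hcdef : c = 1 - 2*t) (ht0 : 0 < t) (ht1 : t < 1/2)
    {x y : Fin d → ℝ} (hx : x ∈ unitCube d) (hy : ∀ i, -t < y i ∧ y i < t) :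
    (fun i => c * (x i - y i) + t) ∈ unitCube d := by
  have hc : 0 < c := by rw [hcdef]; linarith
  rw [unitCube, Set.mem_univ_pi] at hx ⊢
  intro i
  obtain ⟨h1, h2⟩ := Set.mem_Ioo.1 (hx i)
  obtain ⟨h3, h4⟩ := hy i
  rw [Set.mem_Ioo]
  constructor
  · nlinarith
  · nlinarith

lemma affine_preimage_null {c t : ℝ} (hc : c ≠ 0) (x : Fin d → ℝ)
    {N : Set (Fin d → ℝ)} (hN : volume N = 0) :
    volume ((fun y : Fin d → ℝ => fun i => c * (x i - y i) + t) ⁻¹' N) = 0 := by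
  have heq : (fun y : Fin d → ℝ => fun i => c * (x i - y i) + t)
      = fun y : Fin d → ℝ => ((-c) • y + (c • x + fun _ => t)) := by
    funext y; funext i
    simp only [Pi.add_apply, Pi.smul_apply, smul_eq_mul]; ring
  rw [heq]
  have h1 : (fun y : Fin d → ℝ => ((-c) • y + (c • x + fun _ => t))) ⁻¹' N
      = ((-c) • · : (Fin d → ℝ) → (Fin d → ℝ)) ⁻¹'
        ((fun z : Fin d → ℝ => z + (c • x + fun _ => t)) ⁻¹' N) := rfl
  rw [h1, Measure.addHaar_preimage_smul volume (neg_ne_zero.2 hc)]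
  have h2 : volume ((fun z : Fin d → ℝ => z + (c • x + fun _ => t)) ⁻¹' N) = 0 := by
    rw [measure_preimage_add_right volume _ N]; exact hN
  rw [h2, mul_zero]

end Stmt8Aux

open Stmt8Aux in
/-- Rescaling estimate: for `0 < t < 1/2`,
`g(x) = f((1-2t)x + t·(1,…,1))` and `h = φ_t * g` with `φ` a nonnegative mollifier
supported in `(-t,t)^d`, one has
`[h]_ε ≤ (1-2t)^{1-d} [f]_{(1-2t)ε} ≤ (1-2t)^{1-d} ‖f‖_B` and hence
`‖h‖_B ≤ (1-2t)^{1-d} ‖f‖_B`. -/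
theorem stmt8 (d : ℕ) (hd : 0 < d) (f : (Fin d → ℝ) → ℝ) (hf : MemB d f)
    (t : ℝ) (ht0 : 0 < t) (ht1 : t < 1 / 2)
    (φ : (Fin d → ℝ) → ℝ) (hφcont : Continuous φ) (hφc : HasCompactSupport φ)
    (hφsupp : Function.support φ ⊆ Set.univ.pi fun _ => Set.Ioo (-t) t)
    (hφ0 : ∀ y, 0 ≤ φ y) (hφ1 : (∫ y, φ y) = 1) :
    (∀ ε : ℝ, 0 < ε → ε ≤ 1 →
      bbmE d (fun x => ∫ y, φ y * f fun i => (1 - 2 * t) * (x i - y i) + t) ε ≤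
        (1 - 2 * t) ^ (1 - (d : ℤ)) * bbmE d f ((1 - 2 * t) * ε) ∧
      (1 - 2 * t) ^ (1 - (d : ℤ)) * bbmE d f ((1 - 2 * t) * ε) ≤
        (1 - 2 * t) ^ (1 - (d : ℤ)) * bbmNorm d f) ∧
    bbmNorm d (fun x => ∫ y, φ y * f fun i => (1 - 2 * t) * (x i - y i) + t) ≤
      (1 - 2 * t) ^ (1 - (d : ℤ)) * bbmNorm d f := by
  set c := 1 - 2 * t with hcdef
  have hc : 0 < c := by rw [hcdef]; linarith
  have hc1 : c < 1 := by rw [hcdef]; linarith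
  obtain ⟨hfi, hfB⟩ := hf
  set f' := (hfi.aestronglyMeasurable).mk f with hf'def
  have hsm' : StronglyMeasurable f' := (hfi.aestronglyMeasurable).stronglyMeasurable_mk
  have haef : f =ᵐ[volume.restrict (unitCube d)] f' := (hfi.aestronglyMeasurable).ae_eq_mk
  have hfi' : IntegrableOn f' (unitCube d) := hfi.congr haef
  have hN : volume ({z | f z ≠ f' z} ∩ unitCube d) = 0 := by
    have h1 := haef
    rw [Filter.EventuallyEq, ae_iff] at h1
    rwa [Measure.restrict_apply' measurableSet_unitCube] at h1
  have hpoint : ∀ x ∈ unitCube d,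
      (∫ y, φ y * f fun i => c * (x i - y i) + t)
        = ∫ y, φ y * f' fun i => c * (x i - y i) + t := by
    intro x hx
    refine integral_congr_ae ?_
    rw [Filter.EventuallyEq, ae_iff]
    refine measure_mono_null ?_ (affine_preimage_null (c := c) (t := t) hc.ne' x hN)
    intro y hy
    simp only [Set.mem_setOf_eq] at hy
    by_cases hφy : φ y = 0
    · exact absurd (by rw [hφy, zero_mul, zero_mul]) hy
    · have hymem : ∀ i, -t < y i ∧ y i < t := by
        have hmem := hφsupp hφy
        rw [Set.mem_univ_pi] at hmem
        exact fun i => Set.mem_Ioo.1 (hmem i)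
      have hmem2 : (fun i => c * (x i - y i) + t) ∈ unitCube d :=
        transformed_point_mem hcdef ht0 ht1 hx hymem
      have hfne : f (fun i => c * (x i - y i) + t) ≠ f' (fun i => c * (x i - y i) + t) :=
        fun heq => hy (by rw [heq])
      exact Set.mem_preimage.2 ⟨hfne, hmem2⟩
  have hMOhh' : ∀ (a : Fin d → ℝ) (ε' : ℝ), cube d a ε' ⊆ unitCube d →
      MO d (fun x => ∫ y, φ y * f fun i => c * (x i - y i) + t) (cube d a ε')
        = MO d (fun x => ∫ y, φ y * f' fun i => c * (x i - y i) + t) (cube d a ε') := by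
    intro a ε' hQ
    refine MO_congr_ae ?_
    filter_upwards [ae_restrict_mem (measurableSet_cube a ε')] with x hx
    exact hpoint x (hQ hx)
  have hMOff' : ∀ (a : Fin d → ℝ) (ε' : ℝ), cube d a ε' ⊆ unitCube d →
      MO d f (cube d a ε') = MO d f' (cube d a ε') :=
    fun a ε' hQ => MO_congr_ae (ae_restrict_of_ae_restrict_of_subset hQ haef)
  have hfam : ∀ (g g' : (Fin d → ℝ) → ℝ),
      (∀ (a : Fin d → ℝ) (ε' : ℝ), cube d a ε' ⊆ unitCube d →
        MO d g (cube d a ε') = MO d g' (cube d a ε')) →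
      ∀ ε' : ℝ, famSums d g ε' = famSums d g' ε' := by
    intro g g' hg ε'
    ext s
    constructor <;> rintro ⟨F, hF, hcard, rfl⟩
    · exact ⟨F, hF, hcard, Finset.sum_congr rfl fun a ha => hg a ε' (hF.1 a ha)⟩
    · exact ⟨F, hF, hcard, Finset.sum_congr rfl fun a ha => (hg a ε' (hF.1 a ha)).symm⟩
  have key : ∀ ε : ℝ, 0 < ε →
      sSup (famSums d (fun x => ∫ y, φ y * f fun i => c * (x i - y i) + t) ε)
        ≤ sSup (famSums d f (c * ε)) := by
    intro ε hε
    rw [hfam _ _ hMOhh' ε, hfam _ _ hMOff' (c * ε)]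
    exact Real.sSup_le
      (fun s hs => famSums_le hsm' hfi' hd hcdef ht0 ht1 hφcont hφc hφsupp hφ0 hφ1 hε hs)
      (sSup_famSums_nonneg f')
  have main : ∀ ε : ℝ, 0 < ε →
      bbmE d (fun x => ∫ y, φ y * f fun i => c * (x i - y i) + t) ε ≤
        c ^ (1 - (d : ℤ)) * bbmE d f (c * ε) := by
    intro ε hε
    rw [bbmE, bbmE]
    calc ε ^ ((d:ℤ) - 1) *
          sSup (famSums d (fun x => ∫ y, φ y * f fun i => c * (x i - y i) + t) ε)
        ≤ ε ^ ((d:ℤ) - 1) * sSup (famSums d f (c * ε)) :=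
          mul_le_mul_of_nonneg_left (key ε hε) (zpow_nonneg hε.le _)
      _ = c ^ (1 - (d:ℤ)) * ((c * ε) ^ ((d:ℤ) - 1) * sSup (famSums d f (c * ε))) := by
          rw [← mul_assoc, mul_zpow, ← mul_assoc, ← zpow_add₀ hc.ne']
          have he : 1 - (d:ℤ) + ((d:ℤ) - 1) = 0 := by ring
          rw [he, zpow_zero, one_mul]
  have part2 : ∀ ε : ℝ, 0 < ε → ε ≤ 1 →
      c ^ (1 - (d : ℤ)) * bbmE d f (c * ε) ≤ c ^ (1 - (d : ℤ)) * bbmNorm d f := by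
    intro ε hε hε1
    refine mul_le_mul_of_nonneg_left ?_ (zpow_nonneg hc.le _)
    refine le_csSup hfB ⟨c * ε, by positivity, ?_, rfl⟩
    nlinarith
  refine ⟨fun ε hε hε1 => ⟨main ε hε, part2 ε hε hε1⟩, ?_⟩
  refine Real.sSup_le ?_ ?_
  · rintro s ⟨ε, hε, hε1, rfl⟩
    exact (main ε hε).trans (part2 ε hε hε1)
  · refine mul_nonneg (zpow_nonneg hc.le _) ?_
    refine Real.sSup_nonneg ?_
    rintro s ⟨ε, hε, hε1, rfl⟩
    exact mul_nonneg (zpow_nonneg hε.le _) (sSup_famSums_nonneg f)
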